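/- If M is a loopless matroid and x : E → ℝ is an injective weighting (all weights distinct), then the set B = {e ∈ E : μ_e(x) > x(e)} is the unique x-optimal basis. -/

import Mathlib

open Matroid Set

variable {α : Type*}

/-- A circuit of a matroid: a minimal dependent set. -/
def Matroid.IsCircuit' (M : Matroid α) (C : Set α) : Prop :=
  M.Dep C ∧ ∀ ⦃D⦄, D ⊂ C → M.Indep D

/-- Looplessness in the sense of the paper: no element is a loop
(every singleton of the ground set is independent) and no element is a
coloop (no element lies in all bases). -/
def Matroid.PaperLoopless (M : Matroid α) : Prop :=
  ∀ e ∈ M.E, M.Indep {e} ∧ ∃ B, M.IsBase B ∧ e ∉ B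

/-- The weight `x(B)` of a set of ground elements. -/
noncomputable def setWeight (x : α → ℝ) (B : Set α) : ℝ := ∑ᶠ e ∈ B, x e

/-- The min-max weight `μ_e(x)`: the minimum over circuits `C` containing `e`
of the maximum weight of an element of `C - e`. -/
noncomputable def muWeight (M : Matroid α) (x : α → ℝ) (e : α) : ℝ :=
  sInf {w | ∃ C, M.IsCircuit' C ∧ e ∈ C ∧ w = sSup (x '' (C \ {e}))}

/-- The bottleneck weight `b_e(x) = min {x(e), μ_e(x)}`. -/
noncomputable def bottleneck (M : Matroid α) (x : α → ℝ) (e : α) : ℝ :=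
  min (x e) (muWeight M x e)

/-- The minimum weight of a basis of `M`. -/
noncomputable def mwb (M : Matroid α) (x : α → ℝ) : ℝ :=
  sInf {w | ∃ B, M.IsBase B ∧ w = setWeight x B}

/-- `B` is an `x`-optimal basis of `M`. -/
def IsOptimalBase (M : Matroid α) (x : α → ℝ) (B : Set α) : Prop :=
  M.IsBase B ∧ ∀ B', M.IsBase B' → setWeight x B ≤ setWeight x B'

/-- Deletion of a single element. -/
noncomputable def Matroid.del (M : Matroid α) (e : α) : Matroid α :=
  M ↾ (M.E \ {e})

/-- Contraction of a single element, defined by duality: `M/e = (M✶ \ e)✶`. -/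
noncomputable def Matroid.con (M : Matroid α) (e : α) : Matroid α :=
  ((M✶ ↾ (M.E \ {e}))✶)

/-!
A minimum-weight basis `B` exists since there are finitely many bases; we show that each one
equals `{e | x e < μ_e}` by single-element exchanges. If `e ∈ B` is not a coloop, take a circuit
`C ∋ e` realising `μ_e`; some `f ∈ C \ B` gives a basis `B - e + f`, so optimality and distinct
weights force `x e < x f ≤ μ_e`. If `e ∉ B` is not a loop, the heaviest element `g` of its
fundamental circuit minus `e` lies in `B` and `B - g + e` is a basis, so `μ_e ≤ x g ≤ x e`.
-/

namespace Matroid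

variable {M : Matroid α} {B C : Set α} {e f : α}

lemma isCircuit'_iff : M.IsCircuit' C ↔ M.IsCircuit C :=
  isCircuit_iff_forall_ssubset.symm

lemma IsBase.exists_isBase_insert_sdiff_of_mem_isCircuit (hB : M.IsBase B) (hC : M.IsCircuit C)
    (heC : e ∈ C) (heB : e ∈ B) : ∃ f ∈ C, f ∉ B ∧ M.IsBase (insert f B \ {e}) := by
  have hCcl : ¬ C \ {e} ⊆ M.closure (B \ {e}) := fun h ↦ hB.indep.notMem_closure_sdiff_of_mem heB
    (M.closure_subset_closure_of_subset_closure h (hC.mem_closure_sdiff_singleton_of_mem heC))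
  obtain ⟨f, ⟨hfC, hfe⟩, hfcl⟩ := not_subset.mp hCcl
  have hfB : f ∉ B := fun hfB ↦ hfcl (M.subset_closure _ (sdiff_subset.trans hB.subset_ground)
    ⟨hfB, hfe⟩)
  refine ⟨f, hfC, hfB, ?_⟩
  rw [← insert_sdiff_singleton_comm hfe]
  exact hB.exchange_base_of_notMem_closure heB hfcl (hC.subset_ground hfC)

lemma IsBase.isBase_insert_sdiff_of_mem_fundCircuit (hB : M.IsBase B) (heE : e ∈ M.E)
    (heB : e ∉ B) (hf : f ∈ M.fundCircuit e B) (hfe : f ≠ e) : M.IsBase (insert e B \ {f}) := by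
  have hfB : f ∈ B := (mem_insert_iff.mp (M.fundCircuit_subset_insert e B hf)).resolve_left hfe
  refine hB.exchange_isBase_of_indep' hfB heB ?_
  rwa [← hB.indep.mem_fundCircuit_iff (by rwa [hB.closure_eq]) heB]

lemma IsCircuit.sdiff_singleton_nonempty (hC : M.IsCircuit C) (he : M.IsNonloop e) :
    (C \ {e}).Nonempty :=
  nonempty_of_not_subset fun hCe ↦ hC.not_indep (he.indep.subset hCe)

end Matroid

section Weights

variable {M : Matroid α} {x : α → ℝ} {B C : Set α} {e f : α}

lemma setWeight_insert_sdiff (hB : B.Finite) (he : e ∈ B) (hf : f ∉ B) :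
    setWeight x (insert f B \ {e}) = setWeight x B - x e + x f := by
  have hfe : f ≠ e := ne_of_mem_of_not_mem he hf |>.symm
  have hrem : setWeight x B = x e + setWeight x (B \ {e}) := by
    unfold setWeight
    rw [← finsum_mem_insert x (by simp) hB.sdiff, insert_sdiff_singleton, insert_eq_of_mem he]
  unfold setWeight at hrem ⊢
  rw [hrem, ← insert_sdiff_singleton_comm hfe, finsum_mem_insert x (fun h ↦ hf h.1) hB.sdiff]
  ring

lemma IsOptimalBase.le_of_isBase_insert_sdiff [M.RankFinite] (hB : IsOptimalBase M x B)
    (he : e ∈ B) (hf : f ∉ B) (hB' : M.IsBase (insert f B \ {e})) : x e ≤ x f := by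
  have := hB.2 _ hB'
  rw [setWeight_insert_sdiff hB.1.finite he hf] at this
  linarith

lemma exists_isOptimalBase (M : Matroid α) [M.Finite] (x : α → ℝ) : ∃ B, IsOptimalBase M x B := by
  have hfin : {B | M.IsBase B}.Finite :=
    M.ground_finite.finite_subsets.subset fun _ hB ↦ hB.subset_ground
  obtain ⟨B, hB, hmin⟩ := exists_min_image _ (setWeight x) hfin M.exists_isBase
  exact ⟨B, hB, hmin⟩

end Weights

section MuWeight

variable {M : Matroid α} [M.Finite] {x : α → ℝ} {B C : Set α} {e : α}

lemma finite_muWeight_candidates :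
    Set.Finite {w | ∃ C, M.IsCircuit' C ∧ e ∈ C ∧ w = sSup (x '' (C \ {e}))} :=
  (M.ground_finite.finite_subsets.image fun C ↦ sSup (x '' (C \ {e}))).subset <| by
    rintro w ⟨C, hC, -, rfl⟩
    exact ⟨C, hC.1.subset_ground, rfl⟩

lemma muWeight_le_of_isCircuit (hC : M.IsCircuit C) (heC : e ∈ C) :
    muWeight M x e ≤ sSup (x '' (C \ {e})) :=
  csInf_le finite_muWeight_candidates.bddBelow ⟨C, isCircuit'_iff.mpr hC, heC, rfl⟩

lemma exists_isCircuit_muWeight_eq (heE : e ∈ M.E) (he : ¬ M.IsColoop e) :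
    ∃ C, M.IsCircuit C ∧ e ∈ C ∧ muWeight M x e = sSup (x '' (C \ {e})) := by
  obtain ⟨C, hC, heC⟩ := exists_mem_isCircuit_of_not_isColoop heE he
  have hne : Set.Nonempty {w | ∃ C, M.IsCircuit' C ∧ e ∈ C ∧ w = sSup (x '' (C \ {e}))} :=
    ⟨_, C, isCircuit'_iff.mpr hC, heC, rfl⟩
  obtain ⟨C', hC', heC', hμ⟩ := hne.csInf_mem finite_muWeight_candidates
  exact ⟨C', isCircuit'_iff.mp hC', heC', hμ⟩

lemma IsOptimalBase.lt_muWeight (hB : IsOptimalBase M x B) (hinj : InjOn x M.E) (heB : e ∈ B)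
    (he : ¬ M.IsColoop e) : x e < muWeight M x e := by
  obtain ⟨C, hC, heC, hμ⟩ := exists_isCircuit_muWeight_eq (x := x) (hB.1.subset_ground heB) he
  obtain ⟨f, hfC, hfB, hB'⟩ := hB.1.exists_isBase_insert_sdiff_of_mem_isCircuit hC heC heB
  have hfe : f ≠ e := ne_of_mem_of_not_mem heB hfB |>.symm
  have hxef : x e ≠ x f := fun h ↦ hfe (hinj (hB.1.subset_ground heB) (hC.subset_ground hfC) h).symm
  calc x e < x f := (hB.le_of_isBase_insert_sdiff heB hfB hB').lt_of_ne hxef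
    _ ≤ sSup (x '' (C \ {e})) :=
      le_csSup ((M.ground_finite.subset hC.subset_ground).sdiff.image x).bddAbove
        ⟨f, ⟨hfC, hfe⟩, rfl⟩
    _ = muWeight M x e := hμ.symm

lemma IsOptimalBase.muWeight_le (hB : IsOptimalBase M x B) (he : M.IsNonloop e) (heB : e ∉ B) :
    muWeight M x e ≤ x e := by
  have hC := hB.1.fundCircuit_isCircuit he.mem_ground heB
  obtain ⟨g, ⟨hgC, hge⟩, hg⟩ := ((hC.sdiff_singleton_nonempty he).image x).csSup_mem
    ((M.ground_finite.subset hC.subset_ground).sdiff.image x)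
  have hgB : g ∈ B := (mem_insert_iff.mp (M.fundCircuit_subset_insert e B hgC)).resolve_left hge
  calc muWeight M x e ≤ sSup (x '' (M.fundCircuit e B \ {e})) :=
        muWeight_le_of_isCircuit hC (M.mem_fundCircuit e B)
    _ = x g := hg.symm
    _ ≤ x e := hB.le_of_isBase_insert_sdiff hgB heB
        (hB.1.isBase_insert_sdiff_of_mem_fundCircuit he.mem_ground heB hgC hge)

lemma IsOptimalBase.eq_setOf_lt_muWeight (hM : M.PaperLoopless) (hinj : InjOn x M.E)
    (hB : IsOptimalBase M x B) : B = {e ∈ M.E | x e < muWeight M x e} := by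
  ext e
  refine ⟨fun heB ↦ ⟨hB.1.subset_ground heB, hB.lt_muWeight hinj heB ?_⟩, fun ⟨heE, hlt⟩ ↦ ?_⟩
  · obtain ⟨-, B', hB', heB'⟩ := hM e (hB.1.subset_ground heB)
    exact fun hcol ↦ heB' (hcol.mem_of_isBase hB')
  · by_contra heB
    exact (hB.muWeight_le (indep_singleton.mp (hM e heE).1) heB).not_gt hlt

end MuWeight

/-- with distinct weights, `{e : μ_e(x) > x(e)}` is the unique
optimal basis. -/
theorem stmt19 (M : Matroid α) [M.Finite] (hM : M.PaperLoopless)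
    (x : α → ℝ) (hinj : Set.InjOn x M.E) :
    IsOptimalBase M x {e ∈ M.E | x e < muWeight M x e} ∧
      ∀ B, IsOptimalBase M x B → B = {e ∈ M.E | x e < muWeight M x e} := by
  obtain ⟨B, hB⟩ := exists_isOptimalBase M x
  have hunique := fun B' (hB' : IsOptimalBase M x B') ↦ hB'.eq_setOf_lt_muWeight hM hinj
  exact ⟨hunique B hB ▸ hB, hunique⟩
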